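/- There exist three elements x, y, z in PSL(2,7) with o(x) = o(y) = 3, o(z) = 7, x·y·z = 1, and ⟨x, y, z⟩ = PSL(2,7). (Explicitly, viewing PSL(2,7) as permutations of 8 points: x = (1,8,4)(2,7,3), y = (1,2,8)(4,5,6), z = (2,4,6,5,8,3,7).) -/

import Mathlib

/-!
Take `x`, `y`, `z` to be the images of explicit matrices of `SL(2, 𝔽₇)`; their orders and the
relation `x * y * z = 1` are finite computations. For generation, let `H = ⟨x, y, z⟩`. Since
`|PSL(2, 𝔽₇)| = 168` and `21 ∣ |H|`, a proper `H` would have order dividing `84 = 7 * 12`. No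
divisor `d > 1` of `12` satisfies `d ≡ 1 [MOD 7]`, so `H` would have a unique, hence normal, Sylow
`7`-subgroup, namely `⟨z⟩`; but `x` does not normalize `⟨z⟩`.
-/

open Matrix Subgroup
open scoped MatrixGroups

namespace Matrix.SpecialLinearGroup

variable {R : Type*} [CommRing R] [NoZeroDivisors R]

theorem SL2_mem_center_iff {A : SL(2, R)} : A ∈ center SL(2, R) ↔ A = 1 ∨ A = -1 := by
  rw [mem_center_iff, Fintype.card_fin]
  constructor
  · rintro ⟨r, hr, hA⟩
    rcases sq_eq_one_iff.mp hr with rfl | rfl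
    · exact Or.inl (Subtype.ext (by rw [← hA, map_one]; rfl))
    · exact Or.inr (Subtype.ext (by rw [← hA, map_neg, map_one]; rfl))
  · rintro (rfl | rfl)
    · exact ⟨1, one_pow 2, map_one _⟩
    · exact ⟨-1, by norm_num, by rw [map_neg, map_one]; rfl⟩

theorem SL2_card_center (h2 : (2 : R) ≠ 0) : Nat.card (center SL(2, R)) = 2 := by
  have hne : (1 : SL(2, R)) ≠ -1 := fun h => h2 (by
    have h00 := congrArg (fun A : SL(2, R) => (A : Matrix (Fin 2) (Fin 2) R) 0 0) h
    simp only [coe_one, coe_neg, one_apply_eq, neg_apply] at h00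
    linear_combination h00)
  have hcenter : (center SL(2, R) : Set SL(2, R)) = {1, -1} := by
    ext A
    exact SL2_mem_center_iff
  rw [← SetLike.coe_sort_coe, Nat.card_coe_set_eq, hcenter, Set.ncard_pair hne]

end Matrix.SpecialLinearGroup

namespace Matrix.ProjectiveSpecialLinearGroup

variable {R : Type*} [CommRing R] [NoZeroDivisors R]

theorem PSL2_mk_eq_mk_iff {A B : SL(2, R)} :
    (QuotientGroup.mk A : PSL(2, R)) = QuotientGroup.mk B ↔ B = A ∨ B = -A := by
  rw [QuotientGroup.eq, SpecialLinearGroup.SL2_mem_center_iff, inv_mul_eq_one,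
    inv_mul_eq_iff_eq_mul, mul_neg_one, eq_comm (a := A)]

instance [DecidableEq R] : DecidableEq PSL(2, R) :=
  fun a b => Quotient.recOnSubsingleton₂' a b fun _ _ => decidable_of_iff' _ PSL2_mk_eq_mk_iff

end Matrix.ProjectiveSpecialLinearGroup

section Sylow

variable {G : Type*} [Group G] {p m : ℕ} [hp : Fact p.Prime]

theorem Sylow.subsingleton_of_card_dvd_mul [Finite G] (hG : Nat.card G ∣ p * m)
    (hm : ∀ d, d ∣ m → d % p = 1 → d = 1) : Subsingleton (Sylow p G) := by
  have hmod : Nat.card (Sylow p G) % p = 1 :=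
    Eq.trans (card_sylow_modEq_one p G) (Nat.mod_eq_of_lt hp.out.one_lt)
  have hcop : p.Coprime (Nat.card (Sylow p G)) := by
    rw [Nat.Coprime, Nat.gcd_rec, hmod, Nat.gcd_one_left]
  obtain ⟨P⟩ : Nonempty (Sylow p G) := inferInstance
  have hdvd : Nat.card (Sylow p G) ∣ p * m :=
    (P.card_dvd_index.trans (P : Subgroup G).index_dvd_card).trans hG
  exact (Nat.card_eq_one_iff_unique.mp (hm _ (hcop.symm.dvd_of_dvd_mul_left hdvd) hmod)).1

theorem Subgroup.normal_zpowers_of_card_dvd_mul [Finite G] {z : G} (hz : orderOf z = p)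
    (hG : Nat.card G ∣ p * m) (hpm : ¬ p ∣ m) (hm : ∀ d, d ∣ m → d % p = 1 → d = 1) :
    (zpowers z).Normal := by
  have hcard : Nat.card (zpowers z) = p := by rw [Nat.card_zpowers, hz]
  have hindex : (zpowers z).index ∣ m := by
    rw [← (zpowers z).card_mul_index, hcard] at hG
    exact Nat.dvd_of_mul_dvd_mul_left hp.out.pos hG
  have : Subsingleton (Sylow p G) := Sylow.subsingleton_of_card_dvd_mul hG hm
  have hP : IsPGroup p (zpowers z) := IsPGroup.of_card (n := 1) (by rw [hcard, pow_one])
  simpa using (hP.toSylow fun h => hpm (h.trans hindex)).normal_of_subsingleton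

theorem Subgroup.conj_mem_zpowers_of_card_dvd_mul {H : Subgroup G} [Finite H] {x z : G}
    (hx : x ∈ H) (hz : z ∈ H) (hzp : orderOf z = p) (hH : Nat.card H ∣ p * m)
    (hpm : ¬ p ∣ m) (hm : ∀ d, d ∣ m → d % p = 1 → d = 1) : x * z * x⁻¹ ∈ zpowers z := by
  have hnormal := normal_zpowers_of_card_dvd_mul (z := (⟨z, hz⟩ : H))
    (by rw [orderOf_mk, hzp]) hH hpm hm
  obtain ⟨k, hk⟩ := mem_zpowers_iff.mp (hnormal.conj_mem _ (mem_zpowers _) ⟨x, hx⟩)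
  exact mem_zpowers_iff.mpr ⟨k, by simpa using congrArg H.subtype hk⟩

end Sylow

instance fact_prime_seven : Fact (Nat.Prime 7) := ⟨Nat.prime_seven⟩

theorem Subgroup.eq_top_of_card_eq_168 {G : Type*} [Group G] [Finite G] (hG : Nat.card G = 168)
    {H : Subgroup G} {x z : G} (hx : x ∈ H) (hz : z ∈ H) (hx3 : orderOf x = 3)
    (hz7 : orderOf z = 7) (hxz : x * z * x⁻¹ ∉ zpowers z) : H = ⊤ := by
  by_contra hne
  have h168 : Nat.card H ∣ 168 := hG ▸ H.card_subgroup_dvd_card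
  have h21 : 21 ∣ Nat.card H := Nat.Coprime.mul_dvd_of_dvd_of_dvd (by norm_num)
    (hx3 ▸ H.orderOf_dvd_natCard hx) (hz7 ▸ H.orderOf_dvd_natCard hz)
  have hproper : Nat.card H ≠ 168 := fun h => hne (H.eq_top_of_card_eq (h.trans hG.symm))
  have h84 : Nat.card H ∣ 7 * 12 := by
    have key : ∀ n ∈ Nat.divisors 168, 21 ∣ n → n ≠ 168 → n ∣ 7 * 12 := by decide
    exact key _ (Nat.mem_divisors.mpr ⟨h168, by norm_num⟩) h21 hproper
  have h12 : ∀ d, d ∣ 12 → d % 7 = 1 → d = 1 := by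
    have key : ∀ d ∈ Nat.divisors 12, d % 7 = 1 → d = 1 := by decide
    exact fun d hd => key d (Nat.mem_divisors.mpr ⟨hd, by norm_num⟩)
  exact hxz (conj_mem_zpowers_of_card_dvd_mul hx hz hz7 h84 (by norm_num) h12)

theorem card_SL_two_zmod_seven : Nat.card SL(2, ZMod 7) = 336 := by
  rw [Nat.card_eq_fintype_card]
  set_option maxRecDepth 20000 in decide

theorem card_PSL_two_zmod_seven : Nat.card PSL(2, ZMod 7) = 168 := by
  have h := card_eq_card_quotient_mul_card_subgroup (center SL(2, ZMod 7))
  rw [card_SL_two_zmod_seven, SpecialLinearGroup.SL2_card_center (by decide)] at h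
  exact (Nat.eq_of_mul_eq_mul_right two_pos h).symm

def psl27X : PSL(2, ZMod 7) := QuotientGroup.mk ⟨!![0, 3; 2, 6], by decide⟩
def psl27Y : PSL(2, ZMod 7) := QuotientGroup.mk ⟨!![6, 5; 5, 2], by decide⟩
def psl27Z : PSL(2, ZMod 7) := QuotientGroup.mk ⟨!![1, 1; 0, 1], by decide⟩

theorem stmt10 : ∃ x y z : ProjectiveSpecialLinearGroup (Fin 2) (ZMod 7),
    orderOf x = 3 ∧ orderOf y = 3 ∧ orderOf z = 7 ∧ x * y * z = 1 ∧
      Subgroup.closure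
        ({x, y, z} : Set (ProjectiveSpecialLinearGroup (Fin 2) (ZMod 7))) = ⊤ := by
  have hx : orderOf psl27X = 3 := orderOf_eq_prime (by decide) (by decide)
  have hy : orderOf psl27Y = 3 := orderOf_eq_prime (by decide) (by decide)
  have hz : orderOf psl27Z = 7 := orderOf_eq_prime (by decide) (by decide)
  have hxz : psl27X * psl27Z * psl27X⁻¹ ∉ zpowers psl27Z := by
    rw [mem_zpowers_iff_mem_range_orderOf, hz]
    decide
  refine ⟨psl27X, psl27Y, psl27Z, hx, hy, hz, by decide, ?_⟩
  exact eq_top_of_card_eq_168 card_PSL_two_zmod_seven (subset_closure (by simp))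
    (subset_closure (by simp)) hx hz hxz
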